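/- arXiv:1901.02112 — 3 statements merged into one kernel-verified Lean document; each statement's English description precedes it below -/
import Mathlib

section
/- For every k ∈ N₂ it holds that recc(S_k^C) = recc(C) + {λ r^k : λ ≤ 0}. -/
/-!
Put `K := recc C` and `L := {λ r^k : λ ≤ 0}`; both are convex cones, and
`S_k^C = ({x̄} + Q) + (K + L)` with `Q` the (bounded) convex hull of finitely many bounded segments.
A convex cone added to any set is contained in the recession cone of the sum, giving `⊇`.
Conversely, since `x̄ ∈ S_k^C`, a direction `d ∈ recc S_k^C` satisfies `x̄ + t d ∈ Q' + (K + L)`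
for all `t ≥ 0` with `Q'` bounded; dividing by `t → ∞` puts `d` in the closure of `K + L`.
Finally `K + L` is closed: `K` is closed because `C` is open and convex, and `r^k ∉ K` because
`λ⁺_k < ∞`, so the distance from `d + s r^k` to `K` grows linearly in `s` and its infimum over
`s ≥ 0` is attained on a compact interval.
-/

open Set Pointwise

noncomputable section

variable {n : ℕ} {ι : Type*} [Fintype ι]

/-- Recession cone of a set `A`. -/
def recc (A : Set (Fin n → ℝ)) : Set (Fin n → ℝ) :=
  {d | ∀ a ∈ A, ∀ t : ℝ, 0 ≤ t → a + t • d ∈ A}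

/-- The translated simplicial cone `P^B = {x̄ + Σ_j x_j r^j : x_j ≥ 0}`. -/
def PBset (xb : Fin n → ℝ) (r : ι → Fin n → ℝ) : Set (Fin n → ℝ) :=
  {x | ∃ c : ι → ℝ, (∀ j, 0 ≤ c j) ∧ x = xb + ∑ j, c j • r j}

/-- The recession cone of `P^B`, i.e. `{Σ_j t_j r^j : t_j ≥ 0}`. -/
def reccPBset (r : ι → Fin n → ℝ) : Set (Fin n → ℝ) :=
  {x | ∃ t : ι → ℝ, (∀ j, 0 ≤ t j) ∧ x = ∑ j, t j • r j}

/-- `λ⁻ = inf {λ ≥ 0 : x̄ + λ d ∈ C}` (`+∞` if the halfline misses `C`). -/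
noncomputable def lamM (xb d : Fin n → ℝ) (C : Set (Fin n → ℝ)) : EReal :=
  sInf ((fun l : ℝ => (l : EReal)) '' {l : ℝ | 0 ≤ l ∧ xb + l • d ∈ C})

/-- `λ⁺ = sup {λ ≥ 0 : x̄ + λ d ∈ C}` (`−∞` if the halfline misses `C`). -/
noncomputable def lamP (xb d : Fin n → ℝ) (C : Set (Fin n → ℝ)) : EReal :=
  sSup ((fun l : ℝ => (l : EReal)) '' {l : ℝ | 0 ≤ l ∧ xb + l • d ∈ C})

/-- `N₀`: indices whose halfline misses `C`. -/
def N0set (xb : Fin n → ℝ) (r : ι → Fin n → ℝ) (C : Set (Fin n → ℝ)) : Set ι :=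
  {j | ∀ l : ℝ, 0 ≤ l → xb + l • r j ∉ C}

/-- `N₁`: indices with `0 < λ⁻ < +∞` and `λ⁺ = +∞`. -/
def N1set (xb : Fin n → ℝ) (r : ι → Fin n → ℝ) (C : Set (Fin n → ℝ)) : Set ι :=
  {j | 0 < lamM xb (r j) C ∧ lamM xb (r j) C < ⊤ ∧ lamP xb (r j) C = ⊤}

/-- `N₂`: indices with `0 < λ⁻ < +∞` and `λ⁻ < λ⁺ < +∞`. -/
def N2set (xb : Fin n → ℝ) (r : ι → Fin n → ℝ) (C : Set (Fin n → ℝ)) : Set ι :=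
  {j | 0 < lamM xb (r j) C ∧ lamM xb (r j) C < ⊤ ∧
    lamM xb (r j) C < lamP xb (r j) C ∧ lamP xb (r j) C < ⊤}

/-- `S_k^C = {x̄} + conv(⋃_{j∈N₂} {λ r^j : 0 ≤ λ < λ⁺_j}) + {λ r^k : λ ≤ 0} + recc(C)`. -/
def SkCset (xb : Fin n → ℝ) (r : ι → Fin n → ℝ) (C : Set (Fin n → ℝ)) (k : ι) :
    Set (Fin n → ℝ) :=
  {xb} + convexHull ℝ (⋃ j ∈ N2set xb r C,
      {y : Fin n → ℝ | ∃ l : ℝ, 0 ≤ l ∧ (l : EReal) < lamP xb (r j) C ∧ y = l • r j})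
    + {y : Fin n → ℝ | ∃ l : ℝ, l ≤ 0 ∧ y = l • r k}
    + recc C

lemma zero_mem_recc (A : Set (Fin n → ℝ)) : 0 ∈ recc A := by
  intro a ha t _
  simpa using ha

lemma smul_mem_recc {A : Set (Fin n → ℝ)} {d : Fin n → ℝ} (hd : d ∈ recc A) {t : ℝ}
    (ht : 0 ≤ t) : t • d ∈ recc A := by
  intro a ha s hs
  simpa [mul_smul] using hd a ha (s * t) (mul_nonneg hs ht)

lemma add_mem_recc {A : Set (Fin n → ℝ)} {d e : Fin n → ℝ} (hd : d ∈ recc A)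
    (he : e ∈ recc A) : d + e ∈ recc A := by
  intro a ha t ht
  simpa [smul_add, add_assoc] using he _ (hd a ha t ht) t ht

def reccCone (A : Set (Fin n → ℝ)) : ConvexCone ℝ (Fin n → ℝ) where
  carrier := recc A
  smul_mem' _ hc _ hd := smul_mem_recc hd hc.le
  add_mem' _ hd _ he := add_mem_recc hd he

def negRay {E : Type*} [AddCommGroup E] [Module ℝ E] (v : E) : ConvexCone ℝ E where
  carrier := {y | ∃ l : ℝ, l ≤ 0 ∧ y = l • v}
  smul_mem' c hc _ := by
    rintro ⟨l, hl, rfl⟩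
    exact ⟨c * l, mul_nonpos_of_nonneg_of_nonpos hc.le hl, (mul_smul c l v).symm⟩
  add_mem' _ := by
    rintro ⟨l, hl, rfl⟩ _ ⟨l', hl', rfl⟩
    exact ⟨l + l', add_nonpos hl hl', (add_smul l l' v).symm⟩

/-- If `a + 2t • d ∈ closure C`, then `a + t • d` is the midpoint of it and `a ∈ interior C`,
hence lies in `C`. -/
lemma isClosed_recc {C : Set (Fin n → ℝ)} (hCopen : IsOpen C) (hCconv : Convex ℝ C) :
    IsClosed (recc C) := by
  have hrecc : recc C = ⋂ a ∈ C, ⋂ t ∈ Ici (0 : ℝ), (fun d => a + t • d) ⁻¹' closure C := by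
    ext d
    simp only [mem_iInter, mem_preimage, mem_Ici]
    refine ⟨fun hd a ha t ht => subset_closure (hd a ha t ht), fun hd a ha t ht => ?_⟩
    have hmid : (1 / 2 : ℝ) • a + (1 / 2 : ℝ) • (a + (2 * t) • d) ∈ interior C :=
      hCconv.combo_interior_closure_mem_interior (hCopen.interior_eq.symm ▸ ha)
        (hd a ha (2 * t) (by linarith)) (by norm_num) (by norm_num) (by norm_num)
    rw [hCopen.interior_eq] at hmid
    convert hmid using 1
    module
  rw [hrecc]
  exact isClosed_biInter fun a _ => isClosed_biInter fun t _ =>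
    isClosed_closure.preimage (continuous_const.add (continuous_const_smul t))

lemma subset_recc_add (A : Set (Fin n → ℝ)) (M : ConvexCone ℝ (Fin n → ℝ)) :
    (M : Set (Fin n → ℝ)) ⊆ recc (A + M) := by
  rintro d hd _ ⟨a, ha, m, hm, rfl⟩ t ht
  rcases ht.eq_or_lt with rfl | ht
  · simpa using add_mem_add ha hm
  · rw [add_assoc]
    exact add_mem_add ha (M.add_mem hm (M.smul_mem ht hd))

lemma recc_subset_closure_of_subset_add {S Q : Set (Fin n → ℝ)} {M : ConvexCone ℝ (Fin n → ℝ)}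
    (hS : S.Nonempty) (hQ : Bornology.IsBounded Q) (hSQM : S ⊆ Q + M) :
    recc S ⊆ closure (M : Set (Fin n → ℝ)) := by
  intro d hd
  obtain ⟨a, ha⟩ := hS
  obtain ⟨R, hR, hQR⟩ := hQ.exists_pos_norm_le
  rw [Metric.mem_closure_iff]
  intro ε hε
  set ρ := R + ‖a‖
  have hρ : 0 < ρ := by positivity
  set t := 2 * ρ / ε
  have ht : 0 < t := by positivity
  obtain ⟨q, hq, m, hm, hqm : q + m = a + t • d⟩ := hSQM (hd a ha t ht.le)
  refine ⟨t⁻¹ • m, M.smul_mem (inv_pos.mpr ht) hm, ?_⟩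
  have hd_eq : d - t⁻¹ • m = t⁻¹ • (q - a) := by
    rw [eq_sub_of_add_eq' hqm, smul_sub, smul_add, inv_smul_smul₀ ht.ne', smul_sub]
    abel
  calc dist d (t⁻¹ • m) = t⁻¹ * ‖q - a‖ := by
        rw [dist_eq_norm, hd_eq, norm_smul, Real.norm_of_nonneg (inv_nonneg.mpr ht.le)]
    _ ≤ t⁻¹ * ρ := by gcongr; exact (norm_sub_le q a).trans (by linarith [hQR q hq])
    _ = ε / 2 := by simp only [t]; field_simp
    _ < ε := half_lt_self hε

namespace ConvexCone

variable {E : Type*} [NormedAddCommGroup E] [NormedSpace ℝ E]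

lemma smul_set_eq (K : ConvexCone ℝ E) {t : ℝ} (ht : 0 < t) : t • (K : Set E) = K := by
  ext x
  rw [mem_smul_set_iff_inv_smul_mem₀ ht.ne', SetLike.mem_coe, SetLike.mem_coe,
    K.smul_mem_iff (inv_pos.mpr ht)]

lemma infDist_smul (K : ConvexCone ℝ E) {t : ℝ} (ht : 0 < t) (v : E) :
    Metric.infDist (t • v) K = t * Metric.infDist v K := by
  rw [← K.smul_set_eq ht, infDist_smul₀ ht.ne', Real.norm_of_nonneg ht.le, K.smul_set_eq ht]

lemma isClosed_add_negRay (K : ConvexCone ℝ E) (hK : IsClosed (K : Set E)) {v : E}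
    (hv : v ∉ K) : IsClosed ((K + negRay v : ConvexCone ℝ E) : Set E) := by
  refine isClosed_of_closure_subset fun d hd => ?_
  set g : ℝ → ℝ := fun s => Metric.infDist (d + s • v) K
  have happrox : ∀ ε > 0, ∃ s ≥ 0, g s < ε := by
    intro ε hε
    obtain ⟨_, ⟨a, ha, _, ⟨l, hl, rfl⟩, rfl⟩, hdist⟩ := Metric.mem_closure_iff.mp hd ε hε
    refine ⟨-l, neg_nonneg.mpr hl,
      (Metric.infDist_le_dist_of_mem ha).trans_lt (lt_of_eq_of_lt ?_ hdist)⟩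
    beta_reduce
    rw [dist_eq_norm, dist_eq_norm]
    congr 1
    module
  have hKne : (K : Set E).Nonempty := by
    obtain ⟨_, ⟨a, ha, -⟩, -⟩ := Metric.mem_closure_iff.mp hd 1 one_pos
    exact ⟨a, ha⟩
  set δ := Metric.infDist v K
  have hδ : 0 < δ := (hK.notMem_iff_infDist_pos hKne).mp hv
  have hgrow : ∀ s ≥ 0, s * δ - ‖d‖ ≤ g s := by
    intro s hs
    rcases hs.eq_or_lt with rfl | hs
    · rw [zero_mul, zero_sub]
      exact (neg_nonpos.mpr (norm_nonneg d)).trans Metric.infDist_nonneg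
    have := Metric.infDist_le_infDist_add_dist (x := s • v) (y := d + s • v) (s := K)
    rw [K.infDist_smul hs, dist_eq_norm] at this
    simpa using this
  have hg : Continuous g := (Metric.continuous_infDist_pt _).comp
    (continuous_const.add (continuous_id.smul continuous_const))
  obtain ⟨s₀, hs₀, hmin⟩ := (isCompact_Icc (a := 0) (b := (‖d‖ + 1) / δ)).exists_isMinOn
    ⟨0, le_rfl, div_nonneg (by positivity) hδ.le⟩ hg.continuousOn
  have hg₀ : g s₀ = 0 := by
    refine le_antisymm (le_of_forall_pos_lt_add fun ε hε => ?_) Metric.infDist_nonneg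
    obtain ⟨s, hs, hgs⟩ := happrox (min ε 1) (by positivity)
    have hsB : s ≤ (‖d‖ + 1) / δ := by
      rw [le_div_iff₀ hδ]
      linarith [hgrow s hs, min_le_right ε 1]
    linarith [isMinOn_iff.mp hmin s ⟨hs, hsB⟩, min_le_left ε 1]
  refine ⟨d + s₀ • v, (hK.mem_iff_infDist_zero hKne).mpr hg₀, -s₀ • v,
    ⟨-s₀, neg_nonpos.mpr hs₀.1, rfl⟩, by module⟩

end ConvexCone

lemma notMem_recc_of_lamM_lt_top_of_lamP_lt_top {xb d : Fin n → ℝ} {C : Set (Fin n → ℝ)}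
    (hM : lamM xb d C < ⊤) (hP : lamP xb d C < ⊤) : d ∉ recc C := by
  intro hd
  obtain ⟨l, hl, hlC⟩ : {l : ℝ | 0 ≤ l ∧ xb + l • d ∈ C}.Nonempty := by
    by_contra h
    rw [not_nonempty_iff_eq_empty] at h
    simp [lamM, h] at hM
  refine hP.ne ((EReal.eq_top_iff_forall_lt _).mpr fun y => ?_)
  set t := max 0 (y + 1 - l)
  have hmem : xb + (l + t) • d ∈ C := by
    simpa [add_smul, add_assoc] using hd _ hlC t (le_max_left _ _)
  calc (y : EReal) < (l + t : ℝ) :=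
        EReal.coe_lt_coe_iff.mpr (by linarith [le_max_right 0 (y + 1 - l)])
    _ ≤ lamP xb d C := le_sSup ⟨l + t, ⟨by positivity, hmem⟩, rfl⟩

lemma isBounded_setOf_smul_of_lt_top {E : Type*} [NormedAddCommGroup E] [NormedSpace ℝ E]
    (v : E) {μ : EReal} (hμ : μ < ⊤) :
    Bornology.IsBounded {y : E | ∃ l : ℝ, 0 ≤ l ∧ (l : EReal) < μ ∧ y = l • v} := by
  refine ((isCompact_Icc (a := 0) (b := μ.toReal)).image (f := fun l : ℝ => l • v)
    (continuous_id.smul continuous_const)).isBounded.subset ?_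
  rintro _ ⟨l, hl, hlμ, rfl⟩
  exact ⟨l, ⟨hl, EReal.coe_le_coe_iff.mp (hlμ.le.trans (EReal.le_coe_toReal hμ.ne))⟩, rfl⟩

theorem stmt13_general (xb : Fin n → ℝ) (r : ι → Fin n → ℝ)
    (C : Set (Fin n → ℝ)) (hCopen : IsOpen C) (hCconv : Convex ℝ C)
    (k : ι) (hk : k ∈ N2set xb r C) :
    recc (SkCset xb r C k)
      = recc C + {y : Fin n → ℝ | ∃ l : ℝ, l ≤ 0 ∧ y = l • r k} := by
  set Q := convexHull ℝ (⋃ j ∈ N2set xb r C,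
      {y : Fin n → ℝ | ∃ l : ℝ, 0 ≤ l ∧ (l : EReal) < lamP xb (r j) C ∧ y = l • r j})
  have hS : SkCset xb r C k = ({xb} + Q) + ↑(reccCone C + negRay (r k)) := by
    rw [SkCset, add_assoc, add_comm _ (recc C)]
    rfl
  have hQ : Bornology.IsBounded ({xb} + Q) :=
    Bornology.isBounded_singleton.add (isBounded_convexHull.mpr
      ((Bornology.isBounded_biUnion (toFinite _)).mpr
        fun j hj => isBounded_setOf_smul_of_lt_top _ hj.2.2.2))
  have hne : (SkCset xb r C k).Nonempty := by
    refine hS ▸ ⟨xb + 0 + 0, add_mem_add (add_mem_add rfl (subset_convexHull _ _ ?_))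
      ⟨0, zero_mem_recc C, 0, ⟨0, le_rfl, (zero_smul _ _).symm⟩, add_zero 0⟩⟩
    exact mem_biUnion hk ⟨0, le_rfl, by exact_mod_cast hk.1.trans hk.2.2.1, (zero_smul _ _).symm⟩
  have hclosed := (reccCone C).isClosed_add_negRay (isClosed_recc hCopen hCconv)
    (notMem_recc_of_lamM_lt_top_of_lamP_lt_top hk.2.1 hk.2.2.2)
  refine subset_antisymm ?_ (hS ▸ subset_recc_add _ (reccCone C + negRay (r k)))
  calc recc (SkCset xb r C k) ⊆ closure ↑(reccCone C + negRay (r k)) :=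
        recc_subset_closure_of_subset_add hne hQ hS.subset
    _ = _ := hclosed.closure_eq

/-- Observation 1. For `k ∈ N₂`,
`recc(S_k^C) = recc(C) + {λ r^k : λ ≤ 0}`. -/
theorem stmt13 (xb : Fin n → ℝ) (r : ι → Fin n → ℝ) (hr : LinearIndependent ℝ r)
    (C : Set (Fin n → ℝ)) (hCopen : IsOpen C) (hCconv : Convex ℝ C)
    (hxb : xb ∉ closure C) (hrecc : recc C ⊆ reccPBset r)
    (k : ι) (hk : k ∈ N2set xb r C) :
    recc (SkCset xb r C k)
      = recc C + {y : Fin n → ℝ | ∃ l : ℝ, l ≤ 0 ∧ y = l • r k} :=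
  stmt13_general xb r C hCopen hCconv k hk
end
end

section
/- For every j ∈ N, the quantity λ*_j := sup{λ ≥ 0 : x̄ + λ r^j ∈ S_k^C} satisfies: λ*_j = 0 if j ∈ N₀ ∖ J, λ*_j = λ⁺_j if j ∈ N₂ ∖ J, and λ*_j = +∞ if j ∈ J (these cases are exhaustive, since N₁ ⊆ J). -/
open Set Pointwise

noncomputable section

variable {n : ℕ} {ι : Type*} [Fintype ι]

lemma recc_zero (C : Set (Fin n → ℝ)) : (0 : Fin n → ℝ) ∈ recc C := by
  intro a ha t ht; simpa using ha

lemma recc_add {C : Set (Fin n → ℝ)} {d w : Fin n → ℝ} (hd : d ∈ recc C) (hw : w ∈ recc C) :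
    d + w ∈ recc C := by
  intro a ha t ht
  have := hw (a + t • d) (hd a ha t ht) t ht
  simpa [smul_add, add_assoc] using this

lemma recc_smul {C : Set (Fin n → ℝ)} {w : Fin n → ℝ} (hw : w ∈ recc C) {c : ℝ} (hc : 0 ≤ c) :
    c • w ∈ recc C := by
  intro a ha t ht
  have := hw a ha (t * c) (mul_nonneg ht hc)
  simpa [smul_smul] using this

lemma mem_SkC_iff {xb : Fin n → ℝ} {r : ι → Fin n → ℝ} {C : Set (Fin n → ℝ)} {k : ι}
    {x : Fin n → ℝ} :
    x ∈ SkCset xb r C k ↔ ∃ v ∈ convexHull ℝ (⋃ j ∈ N2set xb r C,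
      {y : Fin n → ℝ | ∃ l : ℝ, 0 ≤ l ∧ (l : EReal) < lamP xb (r j) C ∧ y = l • r j}),
      ∃ μ : ℝ, μ ≤ 0 ∧ ∃ e ∈ recc C, x = xb + v + μ • r k + e := by
  constructor
  · intro hx
    unfold SkCset at hx
    obtain ⟨y3, hy3, e, he, rfl⟩ := Set.mem_add.mp hx
    obtain ⟨y2, hy2, κ, hκ, rfl⟩ := Set.mem_add.mp hy3
    obtain ⟨y1, hy1, v, hv, rfl⟩ := Set.mem_add.mp hy2
    obtain ⟨μ, hμ, rfl⟩ := hκ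
    rw [Set.mem_singleton_iff] at hy1; subst hy1
    exact ⟨v, hv, μ, hμ, e, he, rfl⟩
  · rintro ⟨v, hv, μ, hμ, e, he, rfl⟩
    exact Set.add_mem_add (Set.add_mem_add (Set.add_mem_add rfl hv) ⟨μ, hμ, rfl⟩) he

lemma mem_SkC_of {xb : Fin n → ℝ} {r : ι → Fin n → ℝ} {C : Set (Fin n → ℝ)} {k : ι}
    {j : ι} {l : ℝ} (hj : j ∈ N2set xb r C) (hl0 : 0 ≤ l)
    (hl : (l : EReal) < lamP xb (r j) C) : xb + l • r j ∈ SkCset xb r C k :=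
  mem_SkC_iff.mpr ⟨l • r j, subset_convexHull _ _ (Set.mem_biUnion hj ⟨l, hl0, hl, rfl⟩),
    0, le_rfl, 0, recc_zero C, by simp⟩

lemma xb_mem_SkC {xb : Fin n → ℝ} {r : ι → Fin n → ℝ} {C : Set (Fin n → ℝ)} {k : ι}
    (hk : k ∈ N2set xb r C) : xb ∈ SkCset xb r C k := by
  obtain ⟨hk1, hk2, hk3, hk4⟩ := hk
  have h0 : ((0:ℝ) : EReal) < lamP xb (r k) C := by
    simpa using lt_trans hk1 hk3
  simpa using mem_SkC_of (k := k) ⟨hk1, hk2, hk3, hk4⟩ le_rfl h0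

/-- `w + c • r k ∈ recc (S_k^C)` whenever `w ∈ recc C` and `c ≤ 0`. -/
lemma mem_recc_SkC {xb : Fin n → ℝ} {r : ι → Fin n → ℝ} {C : Set (Fin n → ℝ)} {k : ι}
    {w : Fin n → ℝ} (hw : w ∈ recc C) {c : ℝ} (hc : c ≤ 0) :
    w + c • r k ∈ recc (SkCset xb r C k) := by
  intro x hx t ht
  obtain ⟨v, hv, μ, hμ, e, he, rfl⟩ := mem_SkC_iff.mp hx
  have heq : xb + v + μ • r k + e + t • (w + c • r k)
      = xb + v + (μ + t * c) • r k + (e + t • w) := by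
    simp only [smul_add, smul_smul, add_smul]
    abel
  rw [heq]
  exact mem_SkC_iff.mpr ⟨v, hv, μ + t * c, by nlinarith, e + t • w,
    recc_add he (recc_smul hw ht), rfl⟩

lemma conv_mem_D {xb : Fin n → ℝ} {r : ι → Fin n → ℝ} {C : Set (Fin n → ℝ)} {v : Fin n → ℝ}
    (hv : v ∈ convexHull ℝ (⋃ j ∈ N2set xb r C,
      {y : Fin n → ℝ | ∃ l : ℝ, 0 ≤ l ∧ (l : EReal) < lamP xb (r j) C ∧ y = l • r j})) :
    ∃ a : ι → ℝ, (∀ i, 0 ≤ a i) ∧ (∀ i, i ∉ N2set xb r C → a i = 0) ∧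
      (∀ i ∈ N2set xb r C, (a i : EReal) < lamP xb (r i) C) ∧ v = ∑ i, a i • r i := by
  classical
  set D : Set (Fin n → ℝ) := {w | ∃ a : ι → ℝ, (∀ i, 0 ≤ a i) ∧
      (∀ i, i ∉ N2set xb r C → a i = 0) ∧
      (∀ i ∈ N2set xb r C, (a i : EReal) < lamP xb (r i) C) ∧ w = ∑ i, a i • r i} with hD
  have hsub : (⋃ j ∈ N2set xb r C,
      {y : Fin n → ℝ | ∃ l : ℝ, 0 ≤ l ∧ (l : EReal) < lamP xb (r j) C ∧ y = l • r j}) ⊆ D := by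
    rintro y hy
    simp only [Set.mem_iUnion, Set.mem_setOf_eq] at hy
    obtain ⟨i, hi, l, hl0, hll, rfl⟩ := hy
    refine ⟨fun i' => if i' = i then l else 0, ?_, ?_, ?_, ?_⟩
    · intro i'; dsimp only; split <;> simp [hl0]
    · intro i' hi'
      by_cases h : i' = i
      · subst h; exact absurd hi hi'
      · simp [h]
    · intro i' hi'
      by_cases h : i' = i
      · subst h; simpa using hll
      · simp only [h, if_false]
        obtain ⟨h1, _, h3, _⟩ := hi'
        simpa using lt_trans h1 h3
    · simp [ite_smul, Finset.sum_ite_eq', Finset.mem_univ]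
  have hconv : Convex ℝ D := by
    rintro x ⟨a, ha0, ha2, ha3, rfl⟩ y ⟨b, hb0, hb2, hb3, rfl⟩ θ σ hθ hσ hθσ
    refine ⟨fun i => θ * a i + σ * b i, ?_, ?_, ?_, ?_⟩
    · intro i
      have := ha0 i; have := hb0 i
      positivity
    · intro i hi; dsimp only; rw [ha2 i hi, hb2 i hi]; ring
    · intro i hi
      obtain ⟨h1, _, h3, h4⟩ := hi
      have hPt : lamP xb (r i) C ≠ ⊤ := h4.ne
      have hPb : lamP xb (r i) C ≠ ⊥ := ne_bot_of_gt (lt_trans h1 h3)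
      set p := (lamP xb (r i) C).toReal with hpdef
      have hpe : lamP xb (r i) C = (p : EReal) := (EReal.coe_toReal hPt hPb).symm
      have hap : a i < p := by
        have := ha3 i ⟨h1, ‹_›, h3, h4⟩; rw [hpe] at this; exact_mod_cast this
      have hbp : b i < p := by
        have := hb3 i ⟨h1, ‹_›, h3, h4⟩; rw [hpe] at this; exact_mod_cast this
      rw [hpe]
      have : θ * a i + σ * b i < p := by
        rcases eq_or_lt_of_le hθ with h | h
        · have hσ1 : σ = 1 := by linarith
          rw [← h, hσ1]; simpa using hbp
        · have hm1 : θ * a i < θ * p := mul_lt_mul_of_pos_left hap h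
          have hm2 : σ * b i ≤ σ * p := mul_le_mul_of_nonneg_left hbp.le hσ
          have hm3 : θ * p + σ * p = p := by rw [← add_mul, hθσ, one_mul]
          linarith
      exact_mod_cast this
    · simp only [smul_add, Finset.smul_sum, smul_smul, add_smul, ← Finset.sum_add_distrib]
  exact convexHull_min hsub hconv hv

/-- Key lemma: if `x̄ + l r^j ∈ S_k^C` and `r^j ∉ recc(S_k^C)`, then `l = 0` if `j ∉ N₂`
and `l < λ⁺_j` if `j ∈ N₂`. -/
lemma key_lemma {xb : Fin n → ℝ} {r : ι → Fin n → ℝ} {C : Set (Fin n → ℝ)}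
    (hr : LinearIndependent ℝ r) (hrecc : recc C ⊆ reccPBset r) {k : ι}
    (hk : k ∈ N2set xb r C) {j : ι} {l : ℝ}
    (hx : xb + l • r j ∈ SkCset xb r C k) (hnr : r j ∉ recc (SkCset xb r C k)) :
    (j ∉ N2set xb r C → l = 0) ∧
    (j ∈ N2set xb r C → (l : EReal) < lamP xb (r j) C) := by
  classical
  obtain ⟨v, hv, μ, hμ, e, he, heq⟩ := mem_SkC_iff.mp hx
  obtain ⟨a, ha0, haN, haP, rfl⟩ := conv_mem_D hv
  obtain ⟨t, ht0, rfl⟩ := hrecc he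
  set g : ι → ℝ :=
    fun i => a i + t i + (if i = k then μ else 0) - (if i = j then l else 0) with hgdef
  have h2 : (∑ i, a i • r i) + μ • r k + (∑ i, t i • r i) = l • r j := by
    have h3 : xb + ((∑ i, a i • r i) + μ • r k + (∑ i, t i • r i)) = xb + l • r j := by
      rw [heq]; abel
    exact add_left_cancel h3
  have hzero : ∑ i, g i • r i = 0 := by
    have h1 : ∑ i, g i • r i =
        ((∑ i, a i • r i) + μ • r k + (∑ i, t i • r i)) - l • r j := by
      simp only [hgdef, sub_smul, add_smul, ite_smul, zero_smul, Finset.sum_sub_distrib,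
        Finset.sum_add_distrib, Finset.sum_ite_eq', Finset.mem_univ, if_true]
      abel
    rw [h1, h2, sub_self]
  have hgz : ∀ i, g i = 0 := Fintype.linearIndependent_iff.mp hr g hzero
  have hcore : ∀ i, i ≠ j → i ≠ k → a i = 0 ∧ t i = 0 := by
    intro i hij hik
    have hi := hgz i
    simp only [hgdef, hik, hij, if_false] at hi
    constructor <;> nlinarith [ha0 i, ht0 i]
  by_cases hjk : j = k
  · subst hjk
    have hgj := hgz j
    simp only [hgdef, if_pos rfl, if_true] at hgj
    rcases eq_or_lt_of_le (ht0 j) with htj | htj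
    · refine ⟨fun hN => absurd hk hN, fun hN => ?_⟩
      obtain ⟨h1, _, h3, h4⟩ := hN
      have hPt : lamP xb (r j) C ≠ ⊤ := h4.ne
      have hPb : lamP xb (r j) C ≠ ⊥ := ne_bot_of_gt (lt_trans h1 h3)
      have hpe : lamP xb (r j) C = ((lamP xb (r j) C).toReal : EReal) :=
        (EReal.coe_toReal hPt hPb).symm
      have hap : a j < (lamP xb (r j) C).toReal := by
        have := haP j ⟨h1, ‹_›, h3, h4⟩; rw [hpe] at this; exact_mod_cast this
      rw [hpe]
      have : l < (lamP xb (r j) C).toReal := by linarith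
      exact_mod_cast this
    · exfalso; apply hnr
      have hd : (∑ i, t i • r i) = t j • r j := by
        rw [← Finset.sum_subset (Finset.subset_univ ({j} : Finset ι))]
        · simp
        · intro i _ hi
          have hij : i ≠ j := by simpa using hi
          rw [(hcore i hij hij).2, zero_smul]
      have hrj : r j = (t j)⁻¹ • (∑ i, t i • r i) + (0 : ℝ) • r j := by
        rw [hd, smul_smul, inv_mul_cancel₀ htj.ne', one_smul, zero_smul, add_zero]
      rw [hrj]
      exact mem_recc_SkC (recc_smul he (inv_nonneg.mpr htj.le)) le_rfl
  · have hgj := hgz j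
    simp only [hgdef, if_pos rfl, if_true, if_neg hjk] at hgj
    rcases eq_or_lt_of_le (ht0 j) with htj | htj
    · have hl : l = a j := by linarith
      constructor
      · intro hN; rw [hl, haN j hN]
      · intro hN; rw [hl]; exact haP j hN
    · exfalso; apply hnr
      have hd : (∑ i, t i • r i) = t j • r j + t k • r k := by
        rw [← Finset.sum_subset (Finset.subset_univ ({j, k} : Finset ι))]
        · rw [Finset.sum_pair hjk]
        · intro i _ hi
          simp only [Finset.mem_insert, Finset.mem_singleton, not_or] at hi
          rw [(hcore i hi.1 hi.2).2, zero_smul]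
      have hrj : r j = (t j)⁻¹ • (∑ i, t i • r i) + (-(t k * (t j)⁻¹)) • r k := by
        rw [hd, smul_add, smul_smul, smul_smul, inv_mul_cancel₀ htj.ne', one_smul, neg_smul,
          mul_comm]
        abel
      rw [hrj]
      exact mem_recc_SkC (recc_smul he (inv_nonneg.mpr htj.le))
        (neg_nonpos.mpr (mul_nonneg (ht0 k) (inv_nonneg.mpr htj.le)))

lemma N0_not_N2 {xb : Fin n → ℝ} {r : ι → Fin n → ℝ} {C : Set (Fin n → ℝ)} {j : ι}
    (hj : j ∈ N0set xb r C) : j ∉ N2set xb r C := by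
  intro hj2
  obtain ⟨_, h2, _, _⟩ := hj2
  have hemp : {l : ℝ | 0 ≤ l ∧ xb + l • r j ∈ C} = ∅ := by
    ext l
    simp only [Set.mem_setOf_eq, Set.mem_empty_iff_false, iff_false, not_and]
    exact fun hl => hj l hl
  have : lamM xb (r j) C = ⊤ := by
    unfold lamM; rw [hemp]; simp
  rw [this] at h2
  exact absurd h2 (lt_irrefl _)

/-- Proposition 8. With `λ*_j = sup {λ ≥ 0 : x̄ + λ r^j ∈ S_k^C}` and
`J = {i : r^i ∈ recc(S_k^C)}`: `λ*_j = 0` on `N₀ ∖ J`, `λ*_j = λ⁺_j` on `N₂ ∖ J`, and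
`λ*_j = +∞` on `J`. -/
theorem stmt15 (xb : Fin n → ℝ) (r : ι → Fin n → ℝ) (hr : LinearIndependent ℝ r)
    (C : Set (Fin n → ℝ)) (hCopen : IsOpen C) (hCconv : Convex ℝ C)
    (hxb : xb ∉ closure C) (hrecc : recc C ⊆ reccPBset r)
    (k : ι) (hk : k ∈ N2set xb r C) (j : ι) :
    (j ∈ N0set xb r C → r j ∉ recc (SkCset xb r C k) →
      sSup ((fun l : ℝ => (l : EReal)) ''
        {l : ℝ | 0 ≤ l ∧ xb + l • r j ∈ SkCset xb r C k}) = 0) ∧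
    (j ∈ N2set xb r C → r j ∉ recc (SkCset xb r C k) →
      sSup ((fun l : ℝ => (l : EReal)) ''
        {l : ℝ | 0 ≤ l ∧ xb + l • r j ∈ SkCset xb r C k}) = lamP xb (r j) C) ∧
    (r j ∈ recc (SkCset xb r C k) →
      sSup ((fun l : ℝ => (l : EReal)) ''
        {l : ℝ | 0 ≤ l ∧ xb + l • r j ∈ SkCset xb r C k}) = ⊤) := by
  have hxbS : xb ∈ SkCset xb r C k := xb_mem_SkC hk
  refine ⟨?_, ?_, ?_⟩
  · -- j ∈ N₀ \ J : sup = 0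
    intro hj0 hnr
    have hMs : {l : ℝ | 0 ≤ l ∧ xb + l • r j ∈ SkCset xb r C k} = {0} := by
      apply subset_antisymm
      · rintro l ⟨hl0, hl⟩
        exact (key_lemma hr hrecc hk hl hnr).1 (N0_not_N2 hj0)
      · intro l hl
        rw [Set.mem_singleton_iff] at hl; subst hl
        exact ⟨le_rfl, by simpa using hxbS⟩
    rw [hMs, Set.image_singleton]
    simp
  · -- j ∈ N₂ \ J : sup = λ⁺
    intro hj2 hnr
    obtain ⟨hj1, hj2', hj3, hj4⟩ := hj2
    have hjN2 : j ∈ N2set xb r C := ⟨hj1, hj2', hj3, hj4⟩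
    have hPt : lamP xb (r j) C ≠ ⊤ := hj4.ne
    have hPb : lamP xb (r j) C ≠ ⊥ := ne_bot_of_gt (lt_trans hj1 hj3)
    set p := (lamP xb (r j) C).toReal with hpdef
    have hpe : lamP xb (r j) C = (p : EReal) := (EReal.coe_toReal hPt hPb).symm
    apply le_antisymm
    · apply sSup_le
      rintro x ⟨l, ⟨hl0, hl⟩, rfl⟩
      exact ((key_lemma hr hrecc hk hl hnr).2 hjN2).le
    · rw [le_sSup_iff]
      intro b hb
      have h0mem : ((0:ℝ) : EReal) ∈ (fun l : ℝ => (l : EReal)) ''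
          {l : ℝ | 0 ≤ l ∧ xb + l • r j ∈ SkCset xb r C k} :=
        Set.mem_image_of_mem _ ⟨le_rfl, by simpa using hxbS⟩
      have hb0 : ((0:ℝ) : EReal) ≤ b := hb h0mem
      induction b using EReal.rec with
      | bot => simpa using hb0
      | top => exact le_top
      | coe q =>
        have hq0 : (0:ℝ) ≤ q := by exact_mod_cast hb0
        rw [hpe]
        by_contra hqp'
        have hqp : q < p := by
          have := not_le.mp hqp'
          exact_mod_cast this
        set l := (q + p) / 2 with hldef
        have hl0 : 0 ≤ l := by rw [hldef]; linarith
        have hlp : l < p := by rw [hldef]; linarith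
        have hlmem : xb + l • r j ∈ SkCset xb r C k :=
          mem_SkC_of hjN2 hl0 (by rw [hpe]; exact_mod_cast hlp)
        have hle : ((l:ℝ) : EReal) ≤ (q : EReal) :=
          hb (Set.mem_image_of_mem _ ⟨hl0, hlmem⟩)
        have : l ≤ q := by exact_mod_cast hle
        rw [hldef] at this
        linarith
  · -- j ∈ J : sup = ⊤
    intro hrj
    rw [sSup_eq_top]
    intro b hb
    have hmem : ∀ m : ℝ, 0 ≤ m →
        m ∈ {l : ℝ | 0 ≤ l ∧ xb + l • r j ∈ SkCset xb r C k} := by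
      intro m hm
      exact ⟨hm, hrj xb hxbS m hm⟩
    induction b using EReal.rec with
    | bot =>
      exact ⟨((0:ℝ) : EReal), Set.mem_image_of_mem _ (hmem 0 le_rfl), by simp⟩
    | coe q =>
      refine ⟨((max 0 q + 1 : ℝ) : EReal),
        Set.mem_image_of_mem _ (hmem _ (by positivity)), ?_⟩
      have : q < max 0 q + 1 := lt_of_le_of_lt (le_max_right 0 q) (by linarith)
      exact_mod_cast this
    | top => exact absurd hb (lt_irrefl ⊤)
end
end

section
/- Let x̂ ∈ ℝ^N with x̂_j ≥ 0 for all j ∈ N. Then the set function F : 2^{M'} → ℝ defined by F(S) := Σ_{i∈S} x̂_i − Σ_{j∈N∖J} x̂_j/ε'_j(S) (with x̂_j/(+∞) := 0) is supermodular, i.e., F(S ∪ T) + F(S ∩ T) ≥ F(S) + F(T) for all S, T ⊆ M'. -/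
open Set Pointwise

noncomputable section

variable {n : ℕ} {ι : Type*} [Fintype ι]

/-- `J = {i ∈ N : r^i ∈ recc(S_k^C)}`. -/
def Jset (xb : Fin n → ℝ) (r : ι → Fin n → ℝ) (C : Set (Fin n → ℝ)) (k : ι) : Set ι :=
  {i | r i ∈ recc (SkCset xb r C k)}

/-- `γ'_{ij} = sup {γ ≥ 0 : r^i + γ r^j ∈ recc(S_k^C)}` (`+∞` if unbounded). -/
noncomputable def gam' (xb : Fin n → ℝ) (r : ι → Fin n → ℝ) (C : Set (Fin n → ℝ))
    (k i j : ι) : EReal :=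
  sSup ((fun g : ℝ => (g : EReal)) ''
    {g : ℝ | 0 ≤ g ∧ r i + g • r j ∈ recc (SkCset xb r C k)})

/-- `M' = {i ∈ J : γ'_{ij} > 0 for all j ∈ N∖J}`. -/
def M'set (xb : Fin n → ℝ) (r : ι → Fin n → ℝ) (C : Set (Fin n → ℝ)) (k : ι) : Set ι :=
  {i | i ∈ Jset xb r C k ∧ ∀ j, j ∉ Jset xb r C k → 0 < gam' xb r C k i j}

/-- `ε'_j(S) = min_{i∈S} γ'_{ij}` for `S ≠ ∅`, and `+∞` for `S = ∅` (via `sInf ∅ = ⊤`). -/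
noncomputable def eps' (xb : Fin n → ℝ) (r : ι → Fin n → ℝ) (C : Set (Fin n → ℝ))
    (k : ι) (S : Finset ι) (j : ι) : EReal :=
  sInf ((fun i => gam' xb r C k i j) '' (S : Set ι))

open scoped Classical

/-- The cut-violation set function `F(S) = Σ_{i∈S} x̂_i − Σ_{j∈N∖J} x̂_j/ε'_j(S)`. -/
noncomputable def F'fun (xb : Fin n → ℝ) (r : ι → Fin n → ℝ) (C : Set (Fin n → ℝ))
    (k : ι) (xhat : ι → ℝ) (S : Finset ι) : ℝ :=
  ∑ i ∈ S, xhat i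
    - ∑ j ∈ Finset.univ.filter (fun j => j ∉ Jset xb r C k),
        xhat j / (eps' xb r C k S j).toReal


private lemma ediv_le_ediv {x : ℝ} (hx : 0 ≤ x) {a b : EReal} (ha : 0 < a) (hab : a ≤ b) :
    x / b.toReal ≤ x / a.toReal := by
  have ha' : 0 ≤ a.toReal := by
    rcases eq_or_ne a ⊤ with h | h
    · simp [h]
    · have hb' : a ≠ ⊥ := (bot_le.trans_lt ha).ne'
      lift a to ℝ using ⟨h, hb'⟩
      rw [EReal.toReal_coe]
      exact_mod_cast le_of_lt ha
  rcases eq_or_ne b ⊤ with hb | hb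
  · rw [hb, EReal.toReal_top]
    simp only [div_zero]
    exact div_nonneg hx ha'
  · have hat : a ≠ ⊤ := ne_top_of_le_ne_top hb hab
    have habot : a ≠ ⊥ := (bot_le.trans_lt ha).ne'
    have hbbot : b ≠ ⊥ := fun h => habot (le_bot_iff.mp (h ▸ hab))
    lift a to ℝ using ⟨hat, habot⟩
    lift b to ℝ using ⟨hb, hbbot⟩
    rw [EReal.toReal_coe, EReal.toReal_coe]
    have ha0 : (0 : ℝ) < a := by exact_mod_cast ha
    have hab0 : a ≤ b := by exact_mod_cast hab
    exact div_le_div_of_nonneg_left hx ha0 hab0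

private lemma eps'_pos {n : ℕ} {ι : Type*} [Fintype ι] (xb : Fin n → ℝ) (r : ι → Fin n → ℝ)
    (C : Set (Fin n → ℝ)) (k : ι) {S : Finset ι} (hS : (S : Set ι) ⊆ M'set xb r C k)
    {j : ι} (hj : j ∉ Jset xb r C k) : 0 < eps' xb r C k S j := by
  unfold eps'
  rcases Set.eq_empty_or_nonempty ((fun i => gam' xb r C k i j) '' (S : Set ι)) with h | h
  · rw [h, sInf_empty]; exact EReal.zero_lt_top
  · have hfin : ((fun i => gam' xb r C k i j) '' (S : Set ι)).Finite :=
      (S.finite_toSet.image _)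
    have hmem := h.csInf_mem hfin
    obtain ⟨i, hi, hieq⟩ := hmem
    rw [← hieq]
    exact (hS hi).2 j hj

/-- Proposition 10. For nonnegative `x̂`, the set function `F` is
supermodular on subsets of `M'`: `F(S ∪ T) + F(S ∩ T) ≥ F(S) + F(T)`. -/
theorem stmt18 (xb : Fin n → ℝ) (r : ι → Fin n → ℝ) (hr : LinearIndependent ℝ r)
    (C : Set (Fin n → ℝ)) (hCopen : IsOpen C) (hCconv : Convex ℝ C)
    (hxb : xb ∉ closure C) (hrecc : recc C ⊆ reccPBset r)
    (k : ι) (hk : k ∈ N2set xb r C)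
    (xhat : ι → ℝ) (hxhat : ∀ j, 0 ≤ xhat j)
    (S T : Finset ι) (hS : (S : Set ι) ⊆ M'set xb r C k) (hT : (T : Set ι) ⊆ M'set xb r C k) :
    F'fun xb r C k xhat S + F'fun xb r C k xhat T ≤
      F'fun xb r C k xhat (S ∪ T) + F'fun xb r C k xhat (S ∩ T) := by
  classical
  have hST : ((S ∪ T : Finset ι) : Set ι) ⊆ M'set xb r C k := by
    rw [Finset.coe_union]; exact Set.union_subset hS hT
  have hSiT : ((S ∩ T : Finset ι) : Set ι) ⊆ M'set xb r C k := by
    rw [Finset.coe_inter]; exact (Set.inter_subset_left).trans hS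
  have key : ∑ j ∈ Finset.univ.filter (fun j => j ∉ Jset xb r C k),
        xhat j / (eps' xb r C k (S ∪ T) j).toReal
      + ∑ j ∈ Finset.univ.filter (fun j => j ∉ Jset xb r C k),
        xhat j / (eps' xb r C k (S ∩ T) j).toReal
      ≤ ∑ j ∈ Finset.univ.filter (fun j => j ∉ Jset xb r C k),
        xhat j / (eps' xb r C k S j).toReal
      + ∑ j ∈ Finset.univ.filter (fun j => j ∉ Jset xb r C k),
        xhat j / (eps' xb r C k T j).toReal := by
    rw [← Finset.sum_add_distrib, ← Finset.sum_add_distrib]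
    apply Finset.sum_le_sum
    intro j hjmem
    have hj : j ∉ Jset xb r C k := (Finset.mem_filter.mp hjmem).2
    set a := eps' xb r C k S j with ha_def
    set b := eps' xb r C k T j with hb_def
    have ha : 0 < a := eps'_pos xb r C k hS hj
    have hb : 0 < b := eps'_pos xb r C k hT hj
    have hunion : eps' xb r C k (S ∪ T) j = a ⊓ b := by
      unfold eps'
      rw [Finset.coe_union, Set.image_union, sInf_union]
      rfl
    have hinter_a : a ≤ eps' xb r C k (S ∩ T) j := by
      apply sInf_le_sInf
      apply Set.image_mono
      rw [Finset.coe_inter]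
      exact Set.inter_subset_left
    have hinter_b : b ≤ eps' xb r C k (S ∩ T) j := by
      apply sInf_le_sInf
      apply Set.image_mono
      rw [Finset.coe_inter]
      exact Set.inter_subset_right
    rw [hunion]
    rcases le_total a b with hab | hab
    · rw [min_eq_left hab]
      have : xhat j / (eps' xb r C k (S ∩ T) j).toReal ≤ xhat j / b.toReal :=
        ediv_le_ediv (hxhat j) hb hinter_b
      linarith
    · rw [min_eq_right hab]
      have : xhat j / (eps' xb r C k (S ∩ T) j).toReal ≤ xhat j / a.toReal :=
        ediv_le_ediv (hxhat j) ha hinter_a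
      linarith
  have hsum : ∑ i ∈ S ∪ T, xhat i + ∑ i ∈ S ∩ T, xhat i
      = ∑ i ∈ S, xhat i + ∑ i ∈ T, xhat i := Finset.sum_union_inter
  unfold F'fun
  linarith
end
end
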